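/- Let E = (S, A_E, →_E, s₀) and M = (T, A_M, →_M, t₀) be LTSs with finite state sets, and let q* = F^[|S|+|T|](q₀) be the stabilized set of the abstraction sequence. Then for every state ⟨s,t⟩ of the parallel composition E‖M reachable from ⟨s₀,t₀⟩ by a path of any finite length, both inl s ∈ q* and inr t ∈ q* (the stabilized abstraction covers all reachable states of the composition). -/
import Mathlib


/-- A Labeled Transition System over state type `σ` and label type `Λ`:
an alphabet (set of labels), a transition relation contained in
`S × A × S`, and an initial state. -/
structure LTS (σ Λ : Type*) where
  alphabet : Set Λ
  trans : σ → Λ → σ → Prop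
  init : σ
  trans_mem : ∀ {s a s'}, trans s a s' → a ∈ alphabet

variable {S T Λ : Type*}

/-- Transition relation of the parallel composition `E ‖ M`. -/
def ParTrans (E : LTS S Λ) (M : LTS T Λ) (p : S × T) (a : Λ) (p' : S × T) : Prop :=
  (a ∈ E.alphabet \ M.alphabet ∧ E.trans p.1 a p'.1 ∧ p'.2 = p.2) ∨
  (a ∈ M.alphabet \ E.alphabet ∧ M.trans p.2 a p'.2 ∧ p'.1 = p.1) ∨
  (a ∈ E.alphabet ∩ M.alphabet ∧ E.trans p.1 a p'.1 ∧ M.trans p.2 a p'.2)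

/-- Label `a` is relaxed-enabled from `q ⊆ S ⊎ T` with outcome `x'`. -/
def RelaxedEnabled (E : LTS S Λ) (M : LTS T Λ) (q : Set (S ⊕ T)) (a : Λ)
    (x' : S ⊕ T) : Prop :=
  (a ∈ E.alphabet \ M.alphabet ∧
    ∃ s s', Sum.inl s ∈ q ∧ E.trans s a s' ∧ x' = Sum.inl s') ∨
  (a ∈ M.alphabet \ E.alphabet ∧
    ∃ t t', Sum.inr t ∈ q ∧ M.trans t a t' ∧ x' = Sum.inr t') ∨
  (a ∈ E.alphabet ∩ M.alphabet ∧
    ∃ s s' t t', Sum.inl s ∈ q ∧ Sum.inr t ∈ q ∧ E.trans s a s' ∧ M.trans t a t' ∧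
      (x' = Sum.inl s' ∨ x' = Sum.inr t'))

/-- The abstracting-composition step function `F`. -/
def Fstep (E : LTS S Λ) (M : LTS T Λ) (q : Set (S ⊕ T)) : Set (S ⊕ T) :=
  q ∪ {x' | ∃ a, RelaxedEnabled E M q a x'}

/-- The abstraction sequence `q_k = F^[k] {inl s₀, inr t₀}`. -/
def absSeq (E : LTS S Λ) (M : LTS T Λ) (k : ℕ) : Set (S ⊕ T) :=
  (Fstep E M)^[k] {Sum.inl E.init, Sum.inr M.init}

/-- `ℓ 0, …, ℓ (n-1)` is a finite trace of length `n` of `E ‖ M`. -/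
def IsTrace (E : LTS S Λ) (M : LTS T Λ) (n : ℕ) (ℓ : ℕ → Λ) : Prop :=
  ∃ r : ℕ → S × T, r 0 = (E.init, M.init) ∧
    ∀ i < n, ParTrans E M (r i) (ℓ i) (r (i + 1))

/-- `ℓ 0, …, ℓ (n-1)` with witness states `x 0, …, x n` is an
abstracting path of length `n` of the abstracting composition of `E` and `M`,
where `τ` is the special delay label. -/
def IsAbsPath (E : LTS S Λ) (M : LTS T Λ) (τ : Λ) (n : ℕ) (ℓ : ℕ → Λ)
    (x : ℕ → S ⊕ T) : Prop :=
  (∀ i < n, ℓ i ∈ E.alphabet ∪ M.alphabet ∪ {τ}) ∧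
  (∀ i ≤ n, x i ∈ absSeq E M i) ∧
  (∀ i < n,
    (ℓ i = τ ∧ x (i + 1) = x i) ∨
    ((∃ y, RelaxedEnabled E M (absSeq E M i) (ℓ i) y) ∧
      ∃ u v u' v', ParTrans E M (u, v) (ℓ i) (u', v') ∧
        (x i = Sum.inl u ∨ x i = Sum.inr v) ∧
        (x (i + 1) = Sum.inl u' ∨ x (i + 1) = Sum.inr v')))

/-- `p` is reachable from the initial state of `E ‖ M` by a path of length at most `k`. -/
def ReachableWithin (E : LTS S Λ) (M : LTS T Λ) (k : ℕ) (p : S × T) : Prop :=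
  ∃ m ≤ k, ∃ r : ℕ → S × T, ∃ ℓ : ℕ → Λ,
    r 0 = (E.init, M.init) ∧ r m = p ∧
    ∀ i < m, ParTrans E M (r i) (ℓ i) (r (i + 1))

lemma subset_Fstep (E : LTS S Λ) (M : LTS T Λ) (q : Set (S ⊕ T)) :
    q ⊆ Fstep E M q := Set.subset_union_left

lemma absSeq_succ (E : LTS S Λ) (M : LTS T Λ) (k : ℕ) :
    absSeq E M (k + 1) = Fstep E M (absSeq E M k) := by
  simp [absSeq, Function.iterate_succ_apply']

lemma absSeq_mono (E : LTS S Λ) (M : LTS T Λ) : Monotone (absSeq E M) := by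
  apply monotone_nat_of_le_succ
  intro k
  rw [absSeq_succ]
  exact subset_Fstep E M _

lemma absSeq_growth (E : LTS S Λ) (M : LTS T Λ) [Fintype S] [Fintype T] (k : ℕ)
    (h : ∀ j < k, absSeq E M j ≠ absSeq E M (j + 1)) :
    k + 1 ≤ (absSeq E M k).ncard := by
  induction k with
  | zero =>
    have hne : (absSeq E M 0).Nonempty := ⟨Sum.inl E.init, by simp [absSeq]⟩
    have := (Set.ncard_pos (Set.toFinite _)).mpr hne
    omega
  | succ k ih =>
    have h1 : absSeq E M k ⊂ absSeq E M (k + 1) :=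
      ⟨absSeq_mono E M (Nat.le_succ k), fun hsub =>
        h k (Nat.lt_succ_self k)
          (Set.Subset.antisymm (absSeq_mono E M (Nat.le_succ k)) hsub)⟩
    have h2 := Set.ncard_lt_ncard h1 (Set.toFinite _)
    have h3 := ih (fun j hj => h j (Nat.lt_succ_of_lt hj))
    omega

lemma absSeq_const_of_fix (E : LTS S Λ) (M : LTS T Λ) (k : ℕ)
    (hfix : absSeq E M k = absSeq E M (k + 1)) :
    ∀ m, k ≤ m → absSeq E M m = absSeq E M k := by
  intro m hm
  induction m with
  | zero => simp [Nat.le_zero.mp hm]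
  | succ m ih =>
    rcases Nat.lt_or_ge k (m + 1) with h | h
    · have hkm : k ≤ m := Nat.lt_succ_iff.mp h
      rw [absSeq_succ, ih hkm, ← absSeq_succ, ← hfix]
    · have : k = m + 1 := by omega
      rw [this]

lemma absSeq_subset_stab (E : LTS S Λ) (M : LTS T Λ)
    [Fintype S] [Fintype T] (m : ℕ) :
    absSeq E M m ⊆ absSeq E M (Fintype.card S + Fintype.card T) := by
  set N := Fintype.card S + Fintype.card T with hN
  have hcard : ∀ k, (absSeq E M k).ncard ≤ N := by
    intro k
    have := Set.ncard_le_ncard (Set.subset_univ (absSeq E M k)) (Set.toFinite _)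
    simpa [Set.ncard_univ, Nat.card_eq_fintype_card, Fintype.card_sum] using this
  have hfix : ∃ k ≤ N, absSeq E M k = absSeq E M (k + 1) := by
    by_contra hc
    push_neg at hc
    have := absSeq_growth E M (N + 1) (fun j hj => hc j (Nat.lt_succ_iff.mp hj))
    have := hcard (N + 1)
    omega
  obtain ⟨k, hkN, hfix⟩ := hfix
  rcases le_or_gt m N with h | h
  · exact absSeq_mono E M h
  · rw [absSeq_const_of_fix E M k hfix m (le_trans hkN (le_of_lt h))]
    exact absSeq_mono E M hkN

lemma reach_in_absSeq (E : LTS S Λ) (M : LTS T Λ) (m : ℕ) (r : ℕ → S × T)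
    (ℓ : ℕ → Λ) (h0 : r 0 = (E.init, M.init))
    (hstep : ∀ i < m, ParTrans E M (r i) (ℓ i) (r (i + 1))) :
    Sum.inl (r m).1 ∈ absSeq E M m ∧ Sum.inr (r m).2 ∈ absSeq E M m := by
  induction m with
  | zero => simp [absSeq, h0]
  | succ m ih =>
    obtain ⟨hl, hr⟩ := ih (fun i hi => hstep i (Nat.lt_succ_of_lt hi))
    have hst := hstep m (Nat.lt_succ_self m)
    rw [absSeq_succ]
    rcases hst with ⟨ha, ht, he⟩ | ⟨ha, ht, he⟩ | ⟨ha, ht1, ht2⟩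
    · constructor
      · exact Or.inr ⟨ℓ m, Or.inl ⟨ha, _, _, hl, ht, rfl⟩⟩
      · exact Or.inl (he ▸ hr)
    · constructor
      · exact Or.inl (he ▸ hl)
      · exact Or.inr ⟨ℓ m, Or.inr (Or.inl ⟨ha, _, _, hr, ht, rfl⟩)⟩
    · constructor
      · exact Or.inr ⟨ℓ m, Or.inr (Or.inr ⟨ha, _, _, _, _, hl, hr, ht1, ht2, Or.inl rfl⟩)⟩
      · exact Or.inr ⟨ℓ m, Or.inr (Or.inr ⟨ha, _, _, _, _, hl, hr, ht1, ht2, Or.inr rfl⟩)⟩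

/-- The stabilized abstraction `q* = F^[|S|+|T|](q₀)` covers all states of
`E ‖ M` reachable from the initial state by a path of any finite length. -/
theorem stabilized_covers_reachable (E : LTS S Λ) (M : LTS T Λ)
    [Fintype S] [Fintype T] (s : S) (t : T)
    (h : ∃ k, ReachableWithin E M k (s, t)) :
    Sum.inl s ∈ (Fstep E M)^[Fintype.card S + Fintype.card T]
        {Sum.inl E.init, Sum.inr M.init} ∧
    Sum.inr t ∈ (Fstep E M)^[Fintype.card S + Fintype.card T]
        {Sum.inl E.init, Sum.inr M.init} := by
  obtain ⟨k, m, hm, r, ℓ, h0, hmp, hstep⟩ := h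
  have := reach_in_absSeq E M m r ℓ h0 hstep
  rw [hmp] at this
  exact ⟨absSeq_subset_stab E M m this.1, absSeq_subset_stab E M m this.2⟩
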